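/- Let n ≥ 6 and let Γ' be a signed graph of order n that attains the maximum largest eigenvalue λ1 among all unbalanced, negative-C4-free signed graphs of order n, and suppose A(Γ') has a nonnegative unit eigenvector corresponding to λ1(Γ'). If C is a negative cycle of Γ' of shortest length among all negative cycles of Γ', then every negative edge of Γ' lies on C. -/

import Mathlib

open scoped BigOperators

/-- A signed graph on the vertex set `Fin n`: a simple graph together with a
symmetric `±1` sign on each edge. -/
structure SignedGraph (n : ℕ) where
  G : SimpleGraph (Fin n)
  sign : Fin n → Fin n → ℤ
  sign_symm : ∀ i j, sign i j = sign j i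
  sign_pm : ∀ i j, G.Adj i j → sign i j = 1 ∨ sign i j = -1

namespace SignedGraph

variable {n : ℕ}

open Classical in
/-- The adjacency matrix of a signed graph, as a real matrix. -/
noncomputable def adjMatrix (Γ : SignedGraph n) : Matrix (Fin n) (Fin n) ℝ :=
  fun i j => if Γ.G.Adj i j then (Γ.sign i j : ℝ) else 0

/-- The largest eigenvalue (the index) of a signed graph. -/
noncomputable def lambda1 (Γ : SignedGraph n) : ℝ :=
  sSup (spectrum ℝ Γ.adjMatrix)

/-- The sign of an unordered edge. -/
def signEdge (Γ : SignedGraph n) : Sym2 (Fin n) → ℤ :=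
  Sym2.lift ⟨Γ.sign, Γ.sign_symm⟩

/-- The sign of a walk: the product of the signs of its edges. -/
def walkSign (Γ : SignedGraph n) {u v : Fin n} (w : Γ.G.Walk u v) : ℤ :=
  (w.edges.map Γ.signEdge).prod

/-- A negative cycle: a cycle whose sign is `-1`
(equivalently, with an odd number of negative edges). -/
def IsNegCycle (Γ : SignedGraph n) {u : Fin n} (c : Γ.G.Walk u u) : Prop :=
  c.IsCycle ∧ Γ.walkSign c = -1

/-- A signed graph is unbalanced if it contains a negative cycle. -/
def Unbalanced (Γ : SignedGraph n) : Prop :=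
  ∃ (u : Fin n) (c : Γ.G.Walk u u), Γ.IsNegCycle c

/-- A signed graph is negative-`C₄`-free if it contains no negative 4-cycle. -/
def NegC4Free (Γ : SignedGraph n) : Prop :=
  ∀ (u : Fin n) (c : Γ.G.Walk u u), c.IsCycle → c.length = 4 → Γ.walkSign c ≠ -1

end SignedGraph

/-- The signed graph `Γ₁`: vertices `2,…,n-1` induce an all-positive complete
graph, vertices `0` and `1` are joined to each other by a negative edge and to
vertex `2` by positive edges, and have no other neighbours. -/
def Gamma1 (n : ℕ) : SignedGraph n where
  G :=
    { Adj := fun i j => i ≠ j ∧ (2 ≤ min i.val j.val ∨ max i.val j.val ≤ 2)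
      symm := by
        constructor
        intro i j h
        refine ⟨Ne.symm h.1, ?_⟩
        rw [min_comm, max_comm]
        exact h.2
      loopless := by constructor; intro i h; exact h.1 rfl }
  sign := fun i j =>
    if (i.val = 0 ∧ j.val = 1) ∨ (i.val = 1 ∧ j.val = 0) then -1 else 1
  sign_symm := by
    intro i j
    try dsimp only
    by_cases h : (i.val = 0 ∧ j.val = 1) ∨ (i.val = 1 ∧ j.val = 0)
    · rw [if_pos h, if_pos (by tauto)]
    · rw [if_neg h, if_neg (by tauto)]
  sign_pm := by
    intro i j _
    try dsimp only
    by_cases h : (i.val = 0 ∧ j.val = 1) ∨ (i.val = 1 ∧ j.val = 0)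
    · rw [if_pos h]; right; rfl
    · rw [if_neg h]; left; rfl

/-- The signed graph `Γ₂`: vertices `4,…,n-1` induce an all-positive complete
graph, vertices `2` and `3` are joined by positive edges to all of `4,…,n-1`
(but not to each other), vertices `0` and `1` are joined to each other by a
negative edge and to `2` and `3` by positive edges, and have no other
neighbours. -/
def Gamma2 (n : ℕ) : SignedGraph n where
  G :=
    { Adj := fun i j => i ≠ j ∧
        ((i.val ≤ 1 ∧ j.val ≤ 3) ∨ (j.val ≤ 1 ∧ i.val ≤ 3) ∨
         (2 ≤ i.val ∧ i.val ≤ 3 ∧ 4 ≤ j.val) ∨ (2 ≤ j.val ∧ j.val ≤ 3 ∧ 4 ≤ i.val) ∨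
         (4 ≤ i.val ∧ 4 ≤ j.val))
      symm := by
        constructor
        intro i j h
        exact ⟨Ne.symm h.1, by tauto⟩
      loopless := by constructor; intro i h; exact h.1 rfl }
  sign := fun i j =>
    if (i.val = 0 ∧ j.val = 1) ∨ (i.val = 1 ∧ j.val = 0) then -1 else 1
  sign_symm := by
    intro i j
    try dsimp only
    by_cases h : (i.val = 0 ∧ j.val = 1) ∨ (i.val = 1 ∧ j.val = 0)
    · rw [if_pos h, if_pos (by tauto)]
    · rw [if_neg h, if_neg (by tauto)]
  sign_pm := by
    intro i j _
    try dsimp only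
    by_cases h : (i.val = 0 ∧ j.val = 1) ∨ (i.val = 1 ∧ j.val = 0)
    · rw [if_pos h]; right; rfl
    · rw [if_neg h]; left; rfl


/-- The all-negative complete signed graph `(K_n, -)`. -/
def NegKn (n : ℕ) : SignedGraph n where
  G := ⊤
  sign := fun _ _ => -1
  sign_symm := fun _ _ => rfl
  sign_pm := fun _ _ _ => Or.inr rfl

/-- `Γ` is switching equivalent to `Γ'` (up to a relabelling of the vertices):
there is a bijection of the vertices matching the underlying graphs and a
`±1`-valued switching function `s` relating the two sign functions. -/
def SwitchingEquiv {n : ℕ} (Γ Γ' : SignedGraph n) : Prop :=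
  ∃ e : Fin n ≃ Fin n, ∃ s : Fin n → ℤ, (∀ i, s i = 1 ∨ s i = -1) ∧
    (∀ i j, Γ.G.Adj i j ↔ Γ'.G.Adj (e i) (e j)) ∧
    (∀ i j, Γ.G.Adj i j → Γ.sign i j = s i * Γ'.sign (e i) (e j) * s j)

/-!
Let `x` be the nonnegative unit eigenvector of the extremal graph `Γ'` for `λ = λ₁(Γ')`.
A chord of a shortest negative cycle `C` splits it into two shorter cycles, one of which is
negative whatever the sign of the chord; so a negative edge `vw` missing `C` has an endpoint
`v` off `C`. Deleting `vw` keeps `C`, creates no negative `C₄`, and raises the quadratic form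
of `x` by `2 xᵥ x_w ≥ 0`; maximality of `λ` forces equality, so `x` is an eigenvector of the
smaller graph too, and comparing the `w`-th rows gives `xᵥ = 0`. Now cut all edges at `v` and
hang `v` on a vertex `m` with `x_m > 0`: again `C` survives and no negative `C₄` appears (`v`
lies on no cycle), the quadratic form of `x` is unchanged since `xᵥ = 0`, so `x` is again an
eigenvector, and its `v`-th row reads `x_m = λ xᵥ = 0`.
-/

open SimpleGraph Walk Matrix

namespace Matrix

variable {ι : Type*} [Fintype ι] [DecidableEq ι] {B B' : Matrix ι ι ℝ} {μ : ℝ} {x : ι → ℝ}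

theorem IsHermitian.posSemidef_smul_one_sub (hB : B.IsHermitian)
    (hμ : ∀ r ∈ spectrum ℝ B, r ≤ μ) : (μ • 1 - B).PosSemidef := by
  refine posSemidef_iff_isHermitian_and_spectrum_nonneg.2
    ⟨(isHermitian_one.smul (IsSelfAdjoint.all μ)).sub hB, ?_⟩
  rw [← Algebra.algebraMap_eq_smul_one, ← spectrum.singleton_sub_eq]
  rintro _ ⟨_, rfl, r, hr, rfl⟩
  exact sub_nonneg.2 (hμ r hr)

theorem sub_mulVec_eq_neg_smul_one_sub_mulVec (hx : B' *ᵥ x = μ • x) :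
    (B - B') *ᵥ x = -((μ • 1 - B) *ᵥ x) := by
  rw [sub_mulVec, sub_mulVec, hx, smul_mulVec, one_mulVec, neg_sub]

theorem dotProduct_sub_mulVec_nonpos (hB : B.IsHermitian) (hμ : ∀ r ∈ spectrum ℝ B, r ≤ μ)
    (hx : B' *ᵥ x = μ • x) : x ⬝ᵥ (B - B') *ᵥ x ≤ 0 := by
  have := (hB.posSemidef_smul_one_sub hμ).dotProduct_mulVec_nonneg x
  rw [star_trivial] at this
  rw [sub_mulVec_eq_neg_smul_one_sub_mulVec hx, dotProduct_neg]
  exact neg_nonpos.2 this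

theorem sub_mulVec_eq_zero_of_dotProduct_eq_zero (hB : B.IsHermitian)
    (hμ : ∀ r ∈ spectrum ℝ B, r ≤ μ) (hx : B' *ᵥ x = μ • x)
    (h : x ⬝ᵥ (B - B') *ᵥ x = 0) : (B - B') *ᵥ x = 0 := by
  rw [sub_mulVec_eq_neg_smul_one_sub_mulVec hx, dotProduct_neg, neg_eq_zero] at h
  rwa [sub_mulVec_eq_neg_smul_one_sub_mulVec hx, neg_eq_zero,
    ← (hB.posSemidef_smul_one_sub hμ).dotProduct_mulVec_zero_iff, star_trivial]

theorem dotProduct_mulVec_eq_zero_of_forall_ne {R : Type*} [NonUnitalNonAssocSemiring R]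
    {D : Matrix ι ι R} {y : ι → R} {v : ι} (hD : ∀ a b, a ≠ v → b ≠ v → D a b = 0)
    (hy : y v = 0) : y ⬝ᵥ D *ᵥ y = 0 := by
  simp only [dotProduct, mulVec, Finset.mul_sum]
  refine Finset.sum_eq_zero fun a _ => Finset.sum_eq_zero fun b _ => ?_
  by_cases ha : a = v
  · simp [ha, hy]
  by_cases hb : b = v
  · simp [hb, hy]
  simp [hD a b ha hb]

end Matrix

namespace SimpleGraph.Walk

variable {V : Type*} {G : SimpleGraph V}

theorem two_le_length_of_notMem_edges {u v : V} (p : G.Walk u v) (huv : u ≠ v)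
    (h : s(u, v) ∉ p.edges) : 2 ≤ p.length := by
  match p with
  | nil => exact absurd rfl huv
  | cons _ nil => simp at h
  | cons _ (cons _ _) => simp

theorem IsCycle.notMem_support_of_subsingleton_neighborSet {u v : V} {c : G.Walk u u}
    (hc : c.IsCycle) (hv : (G.neighborSet v).Subsingleton) : v ∉ c.support := by
  classical
  intro hvc
  have hc' := hc.rotate hvc
  exact hc'.snd_ne_penultimate
    (hv (adj_snd hc'.not_nil) (adj_penultimate hc'.not_nil).symm)

end SimpleGraph.Walk

namespace SignedGraph

variable {n : ℕ} {Γ Δ : SignedGraph n} {a b u v w m : Fin n}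

theorem sign_mul_self (h : Γ.G.Adj v w) : Γ.sign v w * Γ.sign v w = 1 := by
  rcases Γ.sign_pm v w h with hs | hs <;> simp [hs]

theorem walkSign_cons (h : Γ.G.Adj u v) (p : Γ.G.Walk v w) :
    Γ.walkSign (cons h p) = Γ.sign u v * Γ.walkSign p := by
  simp [walkSign, signEdge]

theorem walkSign_append (p : Γ.G.Walk u v) (q : Γ.G.Walk v w) :
    Γ.walkSign (p.append q) = Γ.walkSign p * Γ.walkSign q := by
  simp [walkSign, edges_append]

theorem walkSign_rotate (c : Γ.G.Walk u u) (h : v ∈ c.support) :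
    Γ.walkSign (c.rotate v h) = Γ.walkSign c :=
  ((c.rotate_edges v h).perm.map _).prod_eq

theorem walkSign_transfer (p : Γ.G.Walk u v) (hp : ∀ e ∈ p.edges, e ∈ Δ.G.edgeSet)
    (hs : ∀ e ∈ p.edges, Δ.signEdge e = Γ.signEdge e) :
    Δ.walkSign (p.transfer Δ.G hp) = Γ.walkSign p := by
  rw [walkSign, edges_transfer]
  exact congrArg List.prod (List.map_congr_left hs)

theorem IsNegCycle.rotate {c : Γ.G.Walk u u} (hc : Γ.IsNegCycle c) (h : v ∈ c.support) :
    Γ.IsNegCycle (c.rotate v h) :=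
  ⟨hc.1.rotate h, (walkSign_rotate c h).trans hc.2⟩

theorem IsNegCycle.transfer {c : Γ.G.Walk u u} (hc : Γ.IsNegCycle c)
    (hE : ∀ e ∈ c.edges, e ∈ Δ.G.edgeSet) (hs : ∀ e ∈ c.edges, Δ.signEdge e = Γ.signEdge e) :
    Δ.IsNegCycle (c.transfer Δ.G hE) :=
  ⟨hc.1.transfer hE, (walkSign_transfer c hE hs).trans hc.2⟩

theorem NegC4Free.of_isCycle_edges (hΓ : Γ.NegC4Free)
    (h : ∀ (u : Fin n) (c : Δ.G.Walk u u), c.IsCycle →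
      ∀ e ∈ c.edges, e ∈ Γ.G.edgeSet ∧ Γ.signEdge e = Δ.signEdge e) :
    Δ.NegC4Free := by
  intro u c hc hlen hneg
  have hE := fun e he => (h u c hc e he).1
  exact hΓ u (c.transfer Γ.G hE) (hc.transfer hE) (by rwa [length_transfer])
    ((walkSign_transfer c hE fun e he => (h u c hc e he).2).trans hneg)

theorem IsNegCycle.exists_shorter_of_chord_at_start {i j : Fin n} {c : Γ.G.Walk i i}
    (hc : Γ.IsNegCycle c) (hj : j ∈ c.support) (hij : Γ.G.Adj i j) (he : s(i, j) ∉ c.edges) :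
    ∃ (v : Fin n) (c' : Γ.G.Walk v v), Γ.IsNegCycle c' ∧ c'.length < c.length := by
  set p := c.takeUntil j hj
  set q := c.dropUntil j hj
  have hpq : p.append q = c := c.take_spec hj
  have hp : s(j, i) ∉ p.edges := fun h =>
    he (Sym2.eq_swap ▸ c.edges_takeUntil_subset_edges hj h)
  have hq : s(i, j) ∉ q.edges := fun h => he (c.edges_dropUntil_subset_edges hj h)
  have hpc : (cons hij.symm p).IsCycle :=
    (cons_isCycle_iff p hij.symm).2 ⟨hc.1.isPath_takeUntil hj, hp⟩
  have hqc : (cons hij q).IsCycle :=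
    (cons_isCycle_iff q hij).2 ⟨(hpq ▸ hc.1).isPath_of_append_right (not_nil_of_ne hij.ne), hq⟩
  have hlen : p.length + q.length = c.length := by rw [← hpq, length_append]
  have hp2 := p.two_le_length_of_notMem_edges hij.ne (by rwa [Sym2.eq_swap])
  have hq2 := q.two_le_length_of_notMem_edges hij.ne.symm (by rwa [Sym2.eq_swap])
  have hsign : Γ.walkSign (cons hij.symm p) * Γ.walkSign (cons hij q) = -1 := by
    rw [walkSign_cons, walkSign_cons, ← Γ.sign_symm, ← hc.2, ← hpq, walkSign_append,
      mul_mul_mul_comm, sign_mul_self hij, one_mul]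
  rcases Int.eq_one_or_neg_one_of_mul_eq_neg_one hsign with h | h
  · refine ⟨i, _, ⟨hqc, by rwa [h, one_mul] at hsign⟩, ?_⟩
    rw [length_cons]
    omega
  · refine ⟨j, _, ⟨hpc, h⟩, ?_⟩
    rw [length_cons]
    omega

theorem IsNegCycle.exists_shorter_of_chord {i j : Fin n} {c : Γ.G.Walk u u}
    (hc : Γ.IsNegCycle c) (hi : i ∈ c.support) (hj : j ∈ c.support) (hij : Γ.G.Adj i j)
    (he : s(i, j) ∉ c.edges) :
    ∃ (v : Fin n) (c' : Γ.G.Walk v v), Γ.IsNegCycle c' ∧ c'.length < c.length := by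
  have hj' : j ∈ (c.rotate i hi).support := (c.mem_support_rotate_iff i hi).2 hj
  have he' : s(i, j) ∉ (c.rotate i hi).edges := fun h =>
    he ((c.rotate_edges i hi).perm.subset h)
  simpa using (hc.rotate hi).exists_shorter_of_chord_at_start hj' hij he'

theorem adjMatrix_isHermitian (Γ : SignedGraph n) : Γ.adjMatrix.IsHermitian := by
  ext a b
  simp only [adjMatrix, conjTranspose_apply, star_trivial, Γ.sign_symm b a]
  rw [Γ.G.adj_comm]

theorem le_lambda1_of_mem_spectrum {r : ℝ} (hr : r ∈ spectrum ℝ Γ.adjMatrix) :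
    r ≤ Γ.lambda1 :=
  le_csSup Γ.adjMatrix.finite_spectrum.bddAbove hr

theorem adjMatrix_apply_eq_of_adj_iff (hadj : Δ.G.Adj a b ↔ Γ.G.Adj a b)
    (hs : Δ.sign a b = Γ.sign a b) : Δ.adjMatrix a b = Γ.adjMatrix a b := by
  by_cases h : Γ.G.Adj a b
  · simp [adjMatrix, h, hadj.2 h, hs]
  · simp [adjMatrix, h, mt hadj.1 h]

def deleteEdge (Γ : SignedGraph n) (v w : Fin n) : SignedGraph n where
  G := Γ.G.deleteEdges {s(v, w)}
  sign := Γ.sign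
  sign_symm := Γ.sign_symm
  sign_pm a b h := Γ.sign_pm a b (Γ.G.deleteEdges_le _ h)

theorem deleteEdge_adjMatrix_sub (h : Γ.G.Adj v w) :
    (Γ.deleteEdge v w).adjMatrix - Γ.adjMatrix =
      -(Γ.sign v w : ℝ) • (single v w 1 + single w v 1) := by
  ext a b
  simp only [Matrix.sub_apply, Matrix.smul_apply, Matrix.add_apply, single_apply]
  by_cases h1 : a = v ∧ b = w
  · obtain ⟨rfl, rfl⟩ := h1
    simp [adjMatrix, deleteEdge, h, h.ne]
  by_cases h2 : a = w ∧ b = v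
  · obtain ⟨rfl, rfl⟩ := h2
    simp [adjMatrix, deleteEdge, h.symm, h.ne.symm, Γ.sign_symm a b]
  rw [adjMatrix_apply_eq_of_adj_iff (Δ := Γ.deleteEdge v w) (Γ := Γ)
      (by simp [deleteEdge, h1, h2]) rfl, if_neg (by tauto), if_neg (by tauto)]
  simp

def reattach (Γ : SignedGraph n) (v m : Fin n) : SignedGraph n where
  G := Γ.G.deleteIncidenceSet v ⊔ edge v m
  sign a b := if a = v ∨ b = v then 1 else Γ.sign a b
  sign_symm a b := by simp only [or_comm, Γ.sign_symm]
  sign_pm a b h := by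
    split_ifs with hab
    · exact .inl rfl
    · rcases h with h | h
      · exact Γ.sign_pm a b (Γ.G.deleteIncidenceSet_le v h)
      · rw [edge_adj] at h
        exact absurd (by rcases h with ⟨⟨rfl, -⟩ | ⟨-, rfl⟩, -⟩ <;> simp) hab

theorem reattach_adj_iff_of_ne (ha : a ≠ v) (hb : b ≠ v) :
    (Γ.reattach v m).G.Adj a b ↔ Γ.G.Adj a b := by
  simp [reattach, edge_adj, deleteIncidenceSet_adj, ha, hb]

theorem reattach_sign_of_ne (ha : a ≠ v) (hb : b ≠ v) :
    (Γ.reattach v m).sign a b = Γ.sign a b := by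
  simp [reattach, ha, hb]

theorem reattach_adj_self_iff : (Γ.reattach v m).G.Adj v b ↔ b = m ∧ v ≠ m := by
  simp only [reattach, sup_adj, deleteIncidenceSet_adj, edge_adj]
  grind

theorem reattach_mem_edgeSet_iff {e : Sym2 (Fin n)} (he : v ∉ e) :
    e ∈ (Γ.reattach v m).G.edgeSet ↔ e ∈ Γ.G.edgeSet := by
  induction e using Sym2.ind with
  | h a b =>
    simp only [Sym2.mem_iff, not_or] at he
    exact reattach_adj_iff_of_ne (Ne.symm he.1) (Ne.symm he.2)

theorem reattach_signEdge {e : Sym2 (Fin n)} (he : v ∉ e) :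
    (Γ.reattach v m).signEdge e = Γ.signEdge e := by
  induction e using Sym2.ind with
  | h a b =>
    simp only [Sym2.mem_iff, not_or] at he
    exact reattach_sign_of_ne (m := m) (Ne.symm he.1) (Ne.symm he.2)

theorem subsingleton_neighborSet_reattach :
    ((Γ.reattach v m).G.neighborSet v).Subsingleton := fun _ hb _ hc =>
  (reattach_adj_self_iff.1 hb).1.trans (reattach_adj_self_iff.1 hc).1.symm

theorem reattach_adjMatrix_of_ne (ha : a ≠ v) (hb : b ≠ v) :
    (Γ.reattach v m).adjMatrix a b = Γ.adjMatrix a b :=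
  adjMatrix_apply_eq_of_adj_iff (reattach_adj_iff_of_ne ha hb) (reattach_sign_of_ne ha hb)

theorem reattach_adjMatrix_self (hm : m ≠ v) :
    (Γ.reattach v m).adjMatrix v = Pi.single m 1 := by
  ext b
  by_cases hb : b = m
  · subst hb
    rw [adjMatrix, if_pos (reattach_adj_self_iff.2 ⟨rfl, hm.symm⟩)]
    simp [reattach]
  · simp [adjMatrix, reattach_adj_self_iff, hb]

variable {Γ' : SignedGraph n} {x : Fin n → ℝ} {C : Γ'.G.Walk u u}

theorem eigenvector_eq_zero_of_neg_edge_notMem_edges (hfree : Γ'.NegC4Free)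
    (hmax : ∀ Γ : SignedGraph n, Γ.Unbalanced → Γ.NegC4Free → Γ.lambda1 ≤ Γ'.lambda1)
    (hx : Γ'.adjMatrix *ᵥ x = Γ'.lambda1 • x) (hnn : ∀ i, 0 ≤ x i) (hC : Γ'.IsNegCycle C)
    (hvw : Γ'.G.Adj v w) (hsgn : Γ'.sign v w = -1) (he : s(v, w) ∉ C.edges) : x v = 0 := by
  set Γ := Γ'.deleteEdge v w
  have hE : ∀ e ∈ C.edges, e ∈ Γ.G.edgeSet := fun e he' => by
    simp only [Γ, deleteEdge, edgeSet_deleteEdges]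
    exact ⟨C.edges_subset_edgeSet he', fun h => he (Set.mem_singleton_iff.1 h ▸ he')⟩
  have hfree' : Γ.NegC4Free := hfree.of_isCycle_edges fun _ c _ _ he' =>
    ⟨edgeSet_subset_edgeSet.2 (Γ'.G.deleteEdges_le _) (c.edges_subset_edgeSet he'), rfl⟩
  have hμ : ∀ r ∈ spectrum ℝ Γ.adjMatrix, r ≤ Γ'.lambda1 := fun r hr =>
    (le_lambda1_of_mem_spectrum hr).trans (hmax Γ ⟨u, _, hC.transfer hE fun _ _ => rfl⟩ hfree')
  have hD : Γ.adjMatrix - Γ'.adjMatrix = single v w 1 + single w v 1 := by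
    rw [deleteEdge_adjMatrix_sub hvw, hsgn]
    simp
  have hquad : x ⬝ᵥ (Γ.adjMatrix - Γ'.adjMatrix) *ᵥ x = 2 * (x v * x w) := by
    rw [hD]
    simp only [add_mulVec, single_mulVec_eq, one_mul, dotProduct_add, dotProduct_smul,
      dotProduct_single, mul_one, smul_eq_mul]
    ring
  have h0 : x ⬝ᵥ (Γ.adjMatrix - Γ'.adjMatrix) *ᵥ x = 0 :=
    le_antisymm (dotProduct_sub_mulVec_nonpos Γ.adjMatrix_isHermitian hμ hx)
      (hquad ▸ by have := hnn v; have := hnn w; positivity)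
  have hrow := congrFun
    (sub_mulVec_eq_zero_of_dotProduct_eq_zero Γ.adjMatrix_isHermitian hμ hx h0) w
  rw [hD] at hrow
  simpa [add_mulVec, single_mulVec_eq, hvw.ne] using hrow

theorem eigenvector_eq_zero_of_eq_zero_of_notMem_support (hfree : Γ'.NegC4Free)
    (hmax : ∀ Γ : SignedGraph n, Γ.Unbalanced → Γ.NegC4Free → Γ.lambda1 ≤ Γ'.lambda1)
    (hx : Γ'.adjMatrix *ᵥ x = Γ'.lambda1 • x) (hC : Γ'.IsNegCycle C) (hv : v ∉ C.support)
    (hxv : x v = 0) (m : Fin n) : x m = 0 := by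
  by_contra hm
  have hmv : m ≠ v := fun h => hm (h ▸ hxv)
  set Γ := Γ'.reattach v m
  have hvC : ∀ e ∈ C.edges, v ∉ e := fun e he hve => hv (C.mem_support_of_mem_edges he hve)
  have hE : ∀ e ∈ C.edges, e ∈ Γ.G.edgeSet := fun e he =>
    (reattach_mem_edgeSet_iff (hvC e he)).2 (C.edges_subset_edgeSet he)
  have hfree' : Γ.NegC4Free := hfree.of_isCycle_edges fun _ c hc e he =>
    have hve : v ∉ e := fun hve => hc.notMem_support_of_subsingleton_neighborSet
      subsingleton_neighborSet_reattach (c.mem_support_of_mem_edges he hve)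
    ⟨(reattach_mem_edgeSet_iff hve).1 (c.edges_subset_edgeSet he), (reattach_signEdge hve).symm⟩
  have hμ : ∀ r ∈ spectrum ℝ Γ.adjMatrix, r ≤ Γ'.lambda1 := fun r hr =>
    (le_lambda1_of_mem_spectrum hr).trans
      (hmax Γ ⟨u, _, hC.transfer hE fun e he => reattach_signEdge (hvC e he)⟩ hfree')
  have h0 : x ⬝ᵥ (Γ.adjMatrix - Γ'.adjMatrix) *ᵥ x = 0 :=
    dotProduct_mulVec_eq_zero_of_forall_ne (fun a b ha hb => by
      rw [Matrix.sub_apply, reattach_adjMatrix_of_ne ha hb, sub_self]) hxv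
  have hrow := congrFun
    (sub_mulVec_eq_zero_of_dotProduct_eq_zero Γ.adjMatrix_isHermitian hμ hx h0) v
  rw [sub_mulVec, Pi.sub_apply, hx, Pi.smul_apply, hxv, smul_zero, sub_zero, mulVec,
    reattach_adjMatrix_self hmv, single_dotProduct, one_mul] at hrow
  exact hm hrow

end SignedGraph

open SignedGraph

theorem shortest_neg_cycle_contains_all_neg_edges_general
    (n : ℕ) (Γ' : SignedGraph n)
    (hfree : Γ'.NegC4Free)
    (hmax : ∀ Γ : SignedGraph n, Γ.Unbalanced → Γ.NegC4Free → Γ.lambda1 ≤ Γ'.lambda1)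
    (x : Fin n → ℝ) (hx : Γ'.adjMatrix.mulVec x = Γ'.lambda1 • x)
    (hnn : ∀ i, 0 ≤ x i) (hunit : ∑ i, x i ^ 2 = 1)
    (u : Fin n) (C : Γ'.G.Walk u u) (hC : Γ'.IsNegCycle C)
    (hshort : ∀ (v : Fin n) (C' : Γ'.G.Walk v v), Γ'.IsNegCycle C' →
      C.length ≤ C'.length) :
    ∀ i j, Γ'.G.Adj i j → Γ'.sign i j = -1 → s(i, j) ∈ C.edges := by
  intro i j hij hsgn
  by_contra he
  have hoff : ∀ {v w}, Γ'.G.Adj v w → Γ'.sign v w = -1 → s(v, w) ∉ C.edges →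
      v ∉ C.support → False := fun hvw hs he' hv => by
    have hx0 := eigenvector_eq_zero_of_eq_zero_of_notMem_support hfree hmax hx hC hv
      (eigenvector_eq_zero_of_neg_edge_notMem_edges hfree hmax hx hnn hC hvw hs he')
    simp [hx0] at hunit
  by_cases hi : i ∈ C.support
  · by_cases hj : j ∈ C.support
    · obtain ⟨v, C', hC', hlt⟩ := hC.exists_shorter_of_chord hi hj hij he
      exact hlt.not_ge (hshort v C' hC')
    · exact hoff hij.symm (Γ'.sign_symm j i ▸ hsgn) (Sym2.eq_swap ▸ he) hj
  · exact hoff hij hsgn he hi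

theorem shortest_neg_cycle_contains_all_neg_edges
    (n : ℕ) (hn : 6 ≤ n) (Γ' : SignedGraph n)
    (hub : Γ'.Unbalanced) (hfree : Γ'.NegC4Free)
    (hmax : ∀ Γ : SignedGraph n, Γ.Unbalanced → Γ.NegC4Free → Γ.lambda1 ≤ Γ'.lambda1)
    (x : Fin n → ℝ) (hx : Γ'.adjMatrix.mulVec x = Γ'.lambda1 • x)
    (hnn : ∀ i, 0 ≤ x i) (hunit : ∑ i, x i ^ 2 = 1)
    (u : Fin n) (C : Γ'.G.Walk u u) (hC : Γ'.IsNegCycle C)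
    (hshort : ∀ (v : Fin n) (C' : Γ'.G.Walk v v), Γ'.IsNegCycle C' →
      C.length ≤ C'.length) :
    ∀ i j, Γ'.G.Adj i j → Γ'.sign i j = -1 → s(i, j) ∈ C.edges :=
  shortest_neg_cycle_contains_all_neg_edges_general n Γ' hfree hmax x hx hnn hunit u C hC hshort
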